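/- arXiv:1311.2669 — 2 statements merged into one kernel-verified Lean document; each statement's English description precedes it below -/
import Mathlib

section
/- Let V be a random variable taking values in a finite set 𝒱 with |𝒱| ≥ 2, let ρ : 𝒱 × 𝒱 → ℝ be symmetric, and let t ≥ 0 with neighborhood sizes N_max_t and N_min_t. For any random variables X, V̂ forming a Markov chain V → X → V̂ (with no assumption on the distribution of V), ℙ(ρ(V̂, V) > t) ≥ (H(V | X) − log N_max_t − log 2) / log((|𝒱| − N_min_t)/N_max_t), provided |𝒱| − N_min_t > N_max_t. -/
/-!
Write `f_v = P(V = v | X)` and `g_w = P(V̂ = w | X)`. Since `∑_w g_w = 1`,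
`H(V | X) = ∑_{v,w} 𝔼[g_w · negMulLog f_v]`, and the tangent line of the concave `negMulLog` at
`P(V = v | V̂ = w)`, together with the Markov property `𝔼[f_v g_w] = P(V = v, V̂ = w)`, bounds each
term; this is the data-processing inequality `H(V | X) ≤ H(V | V̂)`. Fano's argument then splits
`𝒱` into the `t`-ball around `w` and its complement: by the grouping rule and the bound `log 2`
on binary entropy, `H(V | V̂ = w) ≤ log 2 + (1 - e_w) log N_max + e_w log (|𝒱| - N_min)` with
`e_w = P(ρ(w, V) > t | V̂ = w)`, and averaging over `w` gives the bound.
-/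

open MeasureTheory ProbabilityTheory Real
open scoped Classical ENNReal

/-- Conditional Shannon entropy `H(V | X)` (natural log) of a finitely-valued random
variable `V` given a general random variable `X`, defined via the conditional
probabilities `ℙ(V = v | σ(X))`. -/
noncomputable def condEntropyGen {Ω 𝒱 𝒳 : Type*} [MeasurableSpace Ω] [Fintype 𝒱]
    [MeasurableSpace 𝒳] (μ : Measure Ω) (V : Ω → 𝒱) (X : Ω → 𝒳) : ℝ :=
  ∫ ω, ∑ v : 𝒱, Real.negMulLog
    ((μ[(V ⁻¹' {v}).indicator (fun _ => (1 : ℝ)) | MeasurableSpace.comap X inferInstance]) ω) ∂μ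

/-- Markov chain `V → X → W`: `V` and `W` are conditionally independent given `X`,
expressed via conditional expectations of indicator functions given `σ(X)`. -/
def MarkovChain {Ω 𝒜 𝒳 ℬ : Type*} [MeasurableSpace Ω] [MeasurableSpace 𝒜]
    [MeasurableSpace 𝒳] [MeasurableSpace ℬ]
    (μ : Measure Ω) (V : Ω → 𝒜) (X : Ω → 𝒳) (W : Ω → ℬ) : Prop :=
  ∀ (A : Set 𝒜) (B : Set ℬ), MeasurableSet A → MeasurableSet B →
    (μ[fun ω => (V ⁻¹' A).indicator (fun _ => (1 : ℝ)) ω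
          * (W ⁻¹' B).indicator (fun _ => (1 : ℝ)) ω
        | MeasurableSpace.comap X inferInstance])
      =ᵐ[μ]
    fun ω => (μ[(V ⁻¹' A).indicator (fun _ => (1 : ℝ)) | MeasurableSpace.comap X inferInstance]) ω
          * (μ[(W ⁻¹' B).indicator (fun _ => (1 : ℝ)) | MeasurableSpace.comap X inferInstance]) ω

open Finset

namespace Real

lemma negMulLog_le_tangent {x y : ℝ} (hx : 0 ≤ x) (hy : 0 < y) :
    negMulLog x ≤ negMulLog y + (-log y - 1) * (x - y) := by
  rcases hx.eq_or_lt with rfl | hx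
  · simp only [negMulLog]
    linarith
  · have h := mul_le_mul_of_nonneg_left (log_le_sub_one_of_pos (div_pos hy hx)) hx.le
    rw [log_div hy.ne' hx.ne', mul_sub_one, mul_div_cancel₀ _ hx.ne'] at h
    simp only [negMulLog]
    linarith

lemma negMulLog_mem_Icc {x : ℝ} (hx : x ∈ Set.Icc 0 1) : negMulLog x ∈ Set.Icc 0 1 :=
  ⟨negMulLog_nonneg hx.1 hx.2, (negMulLog_le_one_sub_self hx.1).trans (by linarith [hx.1])⟩

lemma log_natCast_le_log {n : ℕ} {x : ℝ} (hx : 1 ≤ x) (h : n ≤ x) : log n ≤ log x := by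
  rcases n.eq_zero_or_pos with rfl | hn
  · simpa using log_nonneg hx
  · exact log_le_log (by exact_mod_cast hn) h

lemma sum_negMulLog_le_negMulLog_sum_add {ι : Type*} (s : Finset ι) {q : ι → ℝ}
    (hq : ∀ i ∈ s, 0 ≤ q i) :
    ∑ i ∈ s, negMulLog (q i) ≤ negMulLog (∑ i ∈ s, q i) + (∑ i ∈ s, q i) * log #s := by
  rcases s.eq_empty_or_nonempty with rfl | hs
  · simp
  have hn : (0 : ℝ) < #s := by exact_mod_cast hs.card_pos
  have hJensen := concaveOn_negMulLog.le_map_sum (t := s) (w := fun _ => (#s : ℝ)⁻¹)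
    (fun _ _ => by positivity) (by simp [hn.ne']) (fun i hi => hq i hi)
  have hinv : negMulLog (#s : ℝ)⁻¹ = (#s : ℝ)⁻¹ * log #s := by simp [negMulLog, log_inv]
  simp only [smul_eq_mul, ← mul_sum, negMulLog_mul, hinv] at hJensen
  have := mul_le_mul_of_nonneg_left hJensen hn.le
  field_simp at this
  linarith

lemma sum_negMulLog_le_log_two_add {ι : Type*} [Fintype ι] {q : ι → ℝ} (hq₀ : ∀ i, 0 ≤ q i)
    (hq₁ : ∑ i, q i = 1) (S : Finset ι) {N M : ℝ} (hN : 1 ≤ N) (hM : 1 ≤ M)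
    (hS : #S ≤ N) (hSc : #Sᶜ ≤ M) :
    ∑ i, negMulLog (q i) ≤ log 2 + log N + (∑ i ∈ Sᶜ, q i) * log (M / N) := by
  set a := ∑ i ∈ S, q i
  set b := ∑ i ∈ Sᶜ, q i
  have hab : a + b = 1 := by rw [sum_add_sum_compl, hq₁]
  have hbin : negMulLog a + negMulLog b ≤ log 2 := by
    simpa [binEntropy_eq_negMulLog_add_negMulLog_one_sub, ← hab]
      using binEntropy_le_log_two (p := a)
  calc ∑ i, negMulLog (q i) = ∑ i ∈ S, negMulLog (q i) + ∑ i ∈ Sᶜ, negMulLog (q i) :=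
        (sum_add_sum_compl S _).symm
    _ ≤ (negMulLog a + a * log #S) + (negMulLog b + b * log #Sᶜ) :=
        add_le_add (sum_negMulLog_le_negMulLog_sum_add S fun i _ => hq₀ i)
          (sum_negMulLog_le_negMulLog_sum_add Sᶜ fun i _ => hq₀ i)
    _ ≤ (negMulLog a + a * log N) + (negMulLog b + b * log M) := by
        have ha₀ : 0 ≤ a := sum_nonneg fun i _ => hq₀ i
        have hb₀ : 0 ≤ b := sum_nonneg fun i _ => hq₀ i
        gcongr negMulLog a + a * ?_ + (negMulLog b + b * ?_)
        · exact log_natCast_le_log hN hS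
        · exact log_natCast_le_log hM hSc
    _ ≤ log 2 + log N + b * log (M / N) := by
        rw [log_div (by positivity) (by positivity)]
        linear_combination hbin + log N * hab

lemma mul_sum_negMulLog_div_sum_le_log_two_add {ι : Type*} [Fintype ι] {p : ι → ℝ}
    (hp : ∀ i, 0 ≤ p i) (S : Finset ι) {N M : ℝ} (hN : 1 ≤ N) (hM : 1 ≤ M)
    (hS : #S ≤ N) (hSc : #Sᶜ ≤ M) :
    (∑ j, p j) * ∑ i, negMulLog (p i / ∑ j, p j)
      ≤ (∑ j, p j) * (log 2 + log N) + (∑ i ∈ Sᶜ, p i) * log (M / N) := by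
  rcases (sum_nonneg fun i _ => hp i : 0 ≤ ∑ j, p j).eq_or_lt with hP | hP
  · have hp0 : ∀ i, p i = 0 := fun i =>
      (sum_eq_zero_iff_of_nonneg fun i _ => hp i).1 hP.symm i (mem_univ i)
    simp [hp0]
  · set P := ∑ j, p j
    have hq₁ : ∑ i, p i / P = 1 := by rw [← sum_div, div_self hP.ne']
    have := mul_le_mul_of_nonneg_left
      (sum_negMulLog_le_log_two_add (fun i => div_nonneg (hp i) hP.le) hq₁ S hN hM hS hSc) hP.le
    rwa [mul_add, ← sum_div, ← mul_assoc, mul_div_cancel₀ _ hP.ne'] at this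

end Real

section

variable {Ω : Type*} [mΩ : MeasurableSpace Ω] {μ : Measure Ω}

lemma sum_measureReal_preimage_singleton_inter {β : Type*} [MeasurableSpace β]
    [MeasurableSingletonClass β] [IsFiniteMeasure μ] {f : Ω → β} (hf : Measurable f)
    (s : Finset β) (B : Set Ω) :
    ∑ b ∈ s, μ.real (f ⁻¹' {b} ∩ B) = μ.real (f ⁻¹' s ∩ B) := by
  have := sum_measureReal_preimage_singleton (μ := μ.restrict B) s
    (fun b _ => hf (measurableSet_singleton b))
  simpa only [measureReal_restrict_apply (hf (measurableSet_singleton _)),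
    measureReal_restrict_apply (hf s.measurableSet)] using this

/-- The conditional entropy `H(V | W)` of a finitely-valued `W`, computed from the joint law. -/
noncomputable def condEntropyFin {𝒱 𝒲 : Type*} [Fintype 𝒱] [Fintype 𝒲] (μ : Measure Ω)
    (V : Ω → 𝒱) (W : Ω → 𝒲) : ℝ :=
  ∑ w, μ.real (W ⁻¹' {w}) *
    ∑ v, negMulLog (μ.real (V ⁻¹' {v} ∩ W ⁻¹' {w}) / μ.real (W ⁻¹' {w}))

lemma condEntropyFin_le_log_two_add {𝒱 𝒲 : Type*} [Fintype 𝒱] [Fintype 𝒲]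
    [MeasurableSpace 𝒱] [MeasurableSingletonClass 𝒱] [MeasurableSpace 𝒲]
    [MeasurableSingletonClass 𝒲] [IsProbabilityMeasure μ] {V : Ω → 𝒱} {W : Ω → 𝒲}
    (hV : Measurable V) (hW : Measurable W) (S : 𝒲 → Finset 𝒱) {N M : ℝ} (hN : 1 ≤ N)
    (hM : 1 ≤ M) (hS : ∀ w, #(S w) ≤ N) (hSc : ∀ w, #(S w)ᶜ ≤ M) :
    condEntropyFin μ V W ≤ log 2 + log N + μ.real {ω | V ω ∉ S (W ω)} * log (M / N) := by
  have hmarginal : ∀ w, ∑ v, μ.real (V ⁻¹' {v} ∩ W ⁻¹' {w}) = μ.real (W ⁻¹' {w}) := fun w => by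
    simp [sum_measureReal_preimage_singleton_inter hV]
  have htotal : ∑ w, μ.real (W ⁻¹' {w}) = 1 := by
    simp [sum_measureReal_preimage_singleton (μ := μ) univ
      fun w _ => hW (measurableSet_singleton w)]
  have herror : μ.real {ω | V ω ∉ S (W ω)}
      = ∑ w, ∑ v ∈ (S w)ᶜ, μ.real (V ⁻¹' {v} ∩ W ⁻¹' {w}) := by
    have hfiber : ∀ w, V ⁻¹' ↑(S w)ᶜ ∩ W ⁻¹' {w} = W ⁻¹' {w} ∩ {ω | V ω ∉ S (W ω)} :=
      fun w => by ext ω; aesop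
    simp_rw [sum_measureReal_preimage_singleton_inter hV, hfiber,
      sum_measureReal_preimage_singleton_inter hW, coe_univ, Set.preimage_univ, Set.univ_inter]
  calc condEntropyFin μ V W
      ≤ ∑ w, (μ.real (W ⁻¹' {w}) * (log 2 + log N)
          + (∑ v ∈ (S w)ᶜ, μ.real (V ⁻¹' {v} ∩ W ⁻¹' {w})) * log (M / N)) := by
        refine sum_le_sum fun w _ => ?_
        simpa only [hmarginal] using mul_sum_negMulLog_div_sum_le_log_two_add
          (p := fun v => μ.real (V ⁻¹' {v} ∩ W ⁻¹' {w})) (fun v => measureReal_nonneg) (S w)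
          hN hM (hS w) (hSc w)
    _ = log 2 + log N + μ.real {ω | V ω ∉ S (W ω)} * log (M / N) := by
        rw [sum_add_distrib, ← sum_mul, ← sum_mul, htotal, herror, one_mul]

lemma condExp_indicator_one_mem_Icc (m : MeasurableSpace Ω) (s : Set Ω) :
    ∀ᵐ ω ∂μ, μ[s.indicator (fun _ => (1 : ℝ)) | m] ω ∈ Set.Icc 0 1 := by
  have h₀ : 0 ≤ᵐ[μ] μ[s.indicator (fun _ => (1 : ℝ)) | m] :=
    condExp_nonneg (ae_of_all _ (Set.indicator_nonneg fun _ _ => zero_le_one))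
  have h₁ : ∀ᵐ ω ∂μ, |μ[s.indicator (fun _ => (1 : ℝ)) | m] ω| ≤ 1 :=
    ae_bdd_abs_condExp_of_ae_bdd_abs (ae_of_all _ fun ω => by
      by_cases h : ω ∈ s <;> simp [h])
  filter_upwards [h₀, h₁] with ω h₀ h₁
  exact ⟨h₀, (le_abs_self _).trans h₁⟩

lemma sum_condExp_indicator_preimage_singleton_ae_eq_one {β : Type*} [Fintype β]
    [MeasurableSpace β] [MeasurableSingletonClass β] [IsFiniteMeasure μ] {f : Ω → β}
    (hf : Measurable f) {m : MeasurableSpace Ω} (hm : m ≤ mΩ) :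
    (fun ω => ∑ b, μ[(f ⁻¹' {b}).indicator (fun _ => (1 : ℝ)) | m] ω) =ᵐ[μ] fun _ => 1 := by
  have hpartition : ∑ b, (f ⁻¹' {b}).indicator (fun _ => (1 : ℝ)) = fun _ => 1 := by
    ext ω
    simp [Set.indicator_apply]
  have h := condExp_finsetSum (μ := μ) (m := m) (s := univ)
    fun b _ => (integrable_const (1 : ℝ)).indicator (hf (measurableSet_singleton b))
  rw [hpartition, condExp_const hm] at h
  filter_upwards [h] with ω hω
  exact (hω.trans (sum_apply ω _ _)).symm

lemma integral_condExp_indicator_one [IsFiniteMeasure μ] {s : Set Ω} (hs : MeasurableSet s)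
    {m : MeasurableSpace Ω} (hm : m ≤ mΩ) :
    ∫ ω, μ[s.indicator (fun _ => (1 : ℝ)) | m] ω ∂μ = μ.real s := by
  rw [integral_condExp hm]
  exact integral_indicator_one hs

lemma MarkovChain.integral_condExp_mul_condExp {𝒜 𝒳 ℬ : Type*} [MeasurableSpace 𝒜]
    [MeasurableSpace 𝒳] [MeasurableSpace ℬ] [IsFiniteMeasure μ] {V : Ω → 𝒜} {X : Ω → 𝒳}
    {W : Ω → ℬ} (h : MarkovChain μ V X W) (hV : Measurable V) (hX : Measurable X)
    (hW : Measurable W) {A : Set 𝒜} {B : Set ℬ} (hA : MeasurableSet A) (hB : MeasurableSet B) :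
    ∫ ω, μ[(V ⁻¹' A).indicator (fun _ => (1 : ℝ)) | MeasurableSpace.comap X inferInstance] ω
        * μ[(W ⁻¹' B).indicator (fun _ => (1 : ℝ)) | MeasurableSpace.comap X inferInstance] ω ∂μ
      = μ.real (V ⁻¹' A ∩ W ⁻¹' B) := by
  rw [← integral_congr_ae (h A B hA hB), integral_condExp hX.comap_le]
  rw [← integral_indicator_one ((hV hA).inter (hW hB)), Set.inter_indicator_one]
  rfl

/-- Jensen's inequality for `negMulLog` with respect to the weight `g`. -/
lemma integral_mul_negMulLog_le {f g : Ω → ℝ} (hf : 0 ≤ᵐ[μ] f) (hg : 0 ≤ᵐ[μ] g)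
    (hg_int : Integrable g μ) (hfg_int : Integrable (fun ω => f ω * g ω) μ)
    (hgf_int : Integrable (fun ω => g ω * negMulLog (f ω)) μ) :
    ∫ ω, g ω * negMulLog (f ω) ∂μ
      ≤ (∫ ω, g ω ∂μ) * negMulLog ((∫ ω, f ω * g ω ∂μ) / ∫ ω, g ω ∂μ) := by
  have hfg : 0 ≤ᵐ[μ] fun ω => f ω * g ω := by
    filter_upwards [hf, hg] with ω h₁ h₂ using mul_nonneg h₁ h₂
  set P := ∫ ω, g ω ∂μ
  set p := ∫ ω, f ω * g ω ∂μ
  by_cases hdeg : P = 0 ∨ p = 0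
  · have hfg0 : (fun ω => f ω * g ω) =ᵐ[μ] 0 := by
      rcases hdeg with h | h
      · filter_upwards [(integral_eq_zero_iff_of_nonneg_ae hg hg_int).1 h] with ω h
        simp [h]
      · exact (integral_eq_zero_iff_of_nonneg_ae hfg hfg_int).1 h
    have : (fun ω => g ω * negMulLog (f ω)) =ᵐ[μ] 0 := by
      filter_upwards [hfg0] with ω h
      rcases mul_eq_zero.1 h with h | h <;> simp [h]
    rw [integral_congr_ae this]
    rcases hdeg with h | h <;> simp [h]
  obtain ⟨hP, hp⟩ := not_or.1 hdeg
  set y := p / P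
  have hyP : y * P = p := div_mul_cancel₀ _ hP
  have hy : 0 < y :=
    div_pos ((integral_nonneg_of_ae hfg).lt_of_ne' hp) ((integral_nonneg_of_ae hg).lt_of_ne' hP)
  calc ∫ ω, g ω * negMulLog (f ω) ∂μ
      ≤ ∫ ω, (-log y - 1) * (f ω * g ω) + y * g ω ∂μ := by
        refine integral_mono_ae hgf_int ((hfg_int.const_mul _).add (hg_int.const_mul _)) ?_
        filter_upwards [hf, hg] with ω h₁ h₂
        have := mul_le_mul_of_nonneg_left (negMulLog_le_tangent h₁ hy) h₂
        simp only [negMulLog] at this ⊢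
        linear_combination this
    _ = (-log y - 1) * p + y * P := by
        rw [integral_add (hfg_int.const_mul _) (hg_int.const_mul _), integral_const_mul,
          integral_const_mul]
    _ = P * negMulLog y := by
        rw [negMulLog]
        linear_combination (1 + log y) * hyP

theorem MarkovChain.condEntropyGen_le_condEntropyFin {𝒱 𝒳 𝒲 : Type*} [Fintype 𝒱]
    [MeasurableSpace 𝒱] [MeasurableSingletonClass 𝒱] [MeasurableSpace 𝒳] [Fintype 𝒲]
    [MeasurableSpace 𝒲] [MeasurableSingletonClass 𝒲] [IsProbabilityMeasure μ] {V : Ω → 𝒱}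
    {X : Ω → 𝒳} {W : Ω → 𝒲} (h : MarkovChain μ V X W) (hV : Measurable V) (hX : Measurable X)
    (hW : Measurable W) :
    condEntropyGen μ V X ≤ condEntropyFin μ V W := by
  set f : 𝒱 → Ω → ℝ := fun v =>
    μ[(V ⁻¹' {v}).indicator (fun _ => (1 : ℝ)) | MeasurableSpace.comap X inferInstance]
  set g : 𝒲 → Ω → ℝ := fun w =>
    μ[(W ⁻¹' {w}).indicator (fun _ => (1 : ℝ)) | MeasurableSpace.comap X inferInstance]
  have hf : ∀ v, ∀ᵐ ω ∂μ, f v ω ∈ Set.Icc 0 1 := fun v => condExp_indicator_one_mem_Icc _ _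
  have hg : ∀ w, ∀ᵐ ω ∂μ, g w ω ∈ Set.Icc 0 1 := fun w => condExp_indicator_one_mem_Icc _ _
  have hmeas : ∀ s : Set Ω, AEMeasurable
      (μ[s.indicator (fun _ => (1 : ℝ)) | MeasurableSpace.comap X inferInstance]) μ :=
    fun s => (stronglyMeasurable_condExp.mono hX.comap_le).aestronglyMeasurable.aemeasurable
  have hgf_int : ∀ v w, Integrable (fun ω => g w ω * negMulLog (f v ω)) μ := fun v w =>
    Integrable.of_mem_Icc 0 1 ((hmeas _).mul (continuous_negMulLog.measurable.comp_aemeasurable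
      (hmeas _))) <| by
        filter_upwards [hf v, hg w] with ω h₁ h₂
        exact unitInterval.mul_mem h₂ (negMulLog_mem_Icc h₁)
  calc condEntropyGen μ V X = ∫ ω, ∑ w, ∑ v, g w ω * negMulLog (f v ω) ∂μ := by
        refine integral_congr_ae ?_
        filter_upwards [sum_condExp_indicator_preimage_singleton_ae_eq_one hW hX.comap_le]
          with ω hω
        rw [← sum_mul_sum, hω, one_mul]
    _ = ∑ w, ∑ v, ∫ ω, g w ω * negMulLog (f v ω) ∂μ := by
        rw [integral_finsetSum _ fun w _ => integrable_finsetSum _ fun v _ => hgf_int v w]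
        exact sum_congr rfl fun w _ => integral_finsetSum _ fun v _ => hgf_int v w
    _ ≤ ∑ w, ∑ v, (∫ ω, g w ω ∂μ)
          * negMulLog ((∫ ω, f v ω * g w ω ∂μ) / ∫ ω, g w ω ∂μ) := by
        gcongr with w _ v _
        refine integral_mul_negMulLog_le ((hf v).mono fun ω h => h.1)
          ((hg w).mono fun ω h => h.1) (Integrable.of_mem_Icc 0 1 (hmeas _) (hg w))
          (Integrable.of_mem_Icc 0 1 ((hmeas _).mul (hmeas _)) ?_) (hgf_int v w)
        filter_upwards [hf v, hg w] with ω h₁ h₂ using unitInterval.mul_mem h₁ h₂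
    _ = condEntropyFin μ V W := by
        simp only [f, g, condEntropyFin, mul_sum,
          integral_condExp_indicator_one (hW (measurableSet_singleton _)) hX.comap_le,
          h.integral_condExp_mul_condExp hV hX hW (measurableSet_singleton _)
            (measurableSet_singleton _)]

end

theorem fano_bound_no_distribution_assumption_general
    {Ω 𝒳 𝒱 : Type*} [MeasurableSpace Ω] [MeasurableSpace 𝒳]
    [Fintype 𝒱] [MeasurableSpace 𝒱] [MeasurableSingletonClass 𝒱]
    (μ : Measure Ω) [IsProbabilityMeasure μ]
    (V : Ω → 𝒱) (X : Ω → 𝒳) (Vhat : Ω → 𝒱)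
    (hV : Measurable V) (hX : Measurable X) (hVhat : Measurable Vhat)
    (hmarkov : MarkovChain μ V X Vhat)
    (ρ : 𝒱 → 𝒱 → ℝ)
    (t : ℝ)
    (Nmax Nmin : ℕ)
    (hNmax : Nmax = Finset.univ.sup fun v : 𝒱 =>
      (Finset.univ.filter fun v' : 𝒱 => ρ v v' ≤ t).card)
    (hNmin : Nmin = sInf (Set.range fun v : 𝒱 =>
      (Finset.univ.filter fun v' : 𝒱 => ρ v v' ≤ t).card))
    (hsep : Nmax + Nmin < Fintype.card 𝒱) :
    (μ {ω | ρ (Vhat ω) (V ω) > t}).toReal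
      ≥ (condEntropyGen μ V X - Real.log Nmax - Real.log 2)
          / Real.log ((Fintype.card 𝒱 - Nmin : ℝ) / Nmax) := by
  rcases Nat.eq_zero_or_pos Nmax with hNmax₀ | hNmax₀
  · simp [hNmax₀] -- the right-hand side is `_ / log (_ / 0) = 0`
  set ball : 𝒱 → Finset 𝒱 := fun w => univ.filter fun v => ρ w v ≤ t
  have hball_le : ∀ w, (#(ball w) : ℝ) ≤ Nmax := fun w => by
    exact_mod_cast hNmax ▸ le_sup (f := fun v => #(ball v)) (mem_univ w)
  have hball_compl_le : ∀ w, (#(ball w)ᶜ : ℝ) ≤ Fintype.card 𝒱 - Nmin := fun w => by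
    rw [card_compl, Nat.cast_sub (card_le_univ _)]
    gcongr
    exact_mod_cast hNmin ▸ Nat.sInf_le (Set.mem_range_self w)
  have hsepR : (Nmax : ℝ) + Nmin < Fintype.card 𝒱 := by exact_mod_cast hsep
  have hNmaxR : (1 : ℝ) ≤ Nmax := by exact_mod_cast hNmax₀
  have hlog_pos : 0 < log ((Fintype.card 𝒱 - Nmin : ℝ) / Nmax) :=
    log_pos ((one_lt_div (by linarith)).2 (by linarith))
  have herror : {ω | ρ (Vhat ω) (V ω) > t} = {ω | V ω ∉ ball (Vhat ω)} := by
    ext ω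
    simp [ball]
  have hfano := (hmarkov.condEntropyGen_le_condEntropyFin hV hX hVhat).trans
    (condEntropyFin_le_log_two_add hV hVhat ball hNmaxR (by linarith) hball_le hball_compl_le)
  rw [ge_iff_le, div_le_iff₀ hlog_pos, herror, ← measureReal_def]
  linarith

/-- **Fano-type bound without assumptions on the distribution of `V`.** For any Markov
chain `V → X → V̂` with `V, V̂` taking values in a finite set `𝒱` of cardinality at least
2, a symmetric `ρ` and `t ≥ 0`, provided `|𝒱| - N_min_t > N_max_t`, one has
`ℙ(ρ(V̂, V) > t) ≥ (H(V | X) - log N_max_t - log 2) / log((|𝒱| - N_min_t)/N_max_t)`. -/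
theorem fano_bound_no_distribution_assumption
    {Ω 𝒳 𝒱 : Type*} [MeasurableSpace Ω] [MeasurableSpace 𝒳]
    [Fintype 𝒱] [MeasurableSpace 𝒱] [MeasurableSingletonClass 𝒱]
    (hcard : 2 ≤ Fintype.card 𝒱)
    (μ : Measure Ω) [IsProbabilityMeasure μ]
    (V : Ω → 𝒱) (X : Ω → 𝒳) (Vhat : Ω → 𝒱)
    (hV : Measurable V) (hX : Measurable X) (hVhat : Measurable Vhat)
    (hmarkov : MarkovChain μ V X Vhat)
    (ρ : 𝒱 → 𝒱 → ℝ) (hsymm : ∀ v w, ρ v w = ρ w v)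
    (t : ℝ) (ht : 0 ≤ t)
    (Nmax Nmin : ℕ)
    (hNmax : Nmax = Finset.univ.sup fun v : 𝒱 =>
      (Finset.univ.filter fun v' : 𝒱 => ρ v v' ≤ t).card)
    (hNmin : Nmin = sInf (Set.range fun v : 𝒱 =>
      (Finset.univ.filter fun v' : 𝒱 => ρ v v' ≤ t).card))
    (hsep : Nmax + Nmin < Fintype.card 𝒱) :
    (μ {ω | ρ (Vhat ω) (V ω) > t}).toReal
      ≥ (condEntropyGen μ V X - Real.log Nmax - Real.log 2)
          / Real.log ((Fintype.card 𝒱 - Nmin : ℝ) / Nmax) :=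
  fano_bound_no_distribution_assumption_general μ V X Vhat hV hX hVhat hmarkov ρ t Nmax Nmin hNmax
    hNmin hsep
end

section
/- There exists a universal constant c > 0 such that for all integers s, d with 1 ≤ s and 2s ≤ d, one has log( ⌊s/4⌋! · (d − ⌊s/4⌋)! / ( s! · (d − s)! ) ) ≥ c · s · log(d/s). Equivalently, log(2^s C(d,s)) − log( ⌈s/4⌉ · 2^{⌊s/4⌋} · C(d, ⌊s/4⌋) ) ≥ c s log(d/s). -/
open Real

/-- `⌈s/4⌉ ≤ 2^(s - ⌊s/4⌋)`. -/
lemma aux_pow_bound (s : ℕ) : (s + 3) / 4 ≤ 2 ^ (s - s / 4) := by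
  induction s using Nat.strong_induction_on with
  | _ s ih =>
    rcases lt_or_ge s 4 with h | h
    · interval_cases s <;> decide
    · obtain ⟨s', rfl⟩ : ∃ s', s = s' + 4 := ⟨s - 4, by omega⟩
      have h1 := ih s' (by omega)
      have h2 : (s' + 4) - (s' + 4) / 4 = (s' - s' / 4) + 3 := by omega
      have h3 : (1 : ℕ) ≤ 2 ^ (s' - s' / 4) := Nat.one_le_two_pow
      have h4 : 2 ^ ((s' - s' / 4) + 3) = 8 * 2 ^ (s' - s' / 4) := by ring
      rw [h2, h4]
      omega

/-- growth of binomial coefficients by a factor `d/s` per step on `[s/4, (s+1)/2]`. -/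
lemma choose_growth (s d : ℕ) (hs : 1 ≤ s) (hd : 2 * s ≤ d) :
    ∀ k : ℕ, 2 * (s / 4 + k) ≤ s + 1 →
      ((d : ℝ) / s) ^ k * d.choose (s / 4) ≤ d.choose (s / 4 + k) := by
  have hs' : (0 : ℝ) < s := by positivity
  intro k
  induction k with
  | zero => intro _; simp
  | succ k ih =>
    intro hk
    have ihk := ih (by omega)
    set j := s / 4 + k with hj
    have hjs : 2 * j ≤ s - 1 := by omega
    have hjd : j ≤ d := by omega
    -- key recurrence
    have hrec : (d.choose (j + 1) : ℝ) * (j + 1) = d.choose j * ((d : ℝ) - j) := by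
      have := Nat.choose_succ_right_eq d j
      have hc : ((d.choose (j + 1) * (j + 1) : ℕ) : ℝ) = ((d.choose j * (d - j) : ℕ) : ℝ) := by
        exact_mod_cast congrArg Nat.cast this
      push_cast [Nat.cast_sub hjd] at hc
      linarith [hc]
    have hj1 : (0 : ℝ) < (j : ℝ) + 1 := by positivity
    have hstep : (d : ℝ) / s ≤ ((d : ℝ) - j) / ((j : ℝ) + 1) := by
      rw [div_le_div_iff₀ hs' hj1]
      have hjr : 2 * (j : ℝ) ≤ (s : ℝ) - 1 := by
        have : (2 * j : ℕ) ≤ s - 1 := hjs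
        have h1 : ((2 * j : ℕ) : ℝ) ≤ ((s - 1 : ℕ) : ℝ) := by exact_mod_cast this
        push_cast [Nat.cast_sub hs] at h1
        linarith
      have hdr : 2 * (s : ℝ) ≤ d := by exact_mod_cast hd
      nlinarith
    have hCj : (0 : ℝ) ≤ (d.choose j : ℝ) := by positivity
    have hCjnew : (d.choose (j + 1) : ℝ) = (d.choose j : ℝ) * (((d : ℝ) - j) / ((j : ℝ) + 1)) := by
      field_simp
      linarith [hrec]
    have hrpos : (0 : ℝ) ≤ (d : ℝ) / s := by positivity
    calc ((d : ℝ) / s) ^ (k + 1) * d.choose (s / 4)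
        = (((d : ℝ) / s) ^ k * d.choose (s / 4)) * ((d : ℝ) / s) := by ring
      _ ≤ (d.choose j : ℝ) * (((d : ℝ) - j) / ((j : ℝ) + 1)) := by
          apply mul_le_mul ihk hstep hrpos hCj
      _ = d.choose (j + 1) := hCjnew.symm
      _ = d.choose (s / 4 + (k + 1)) := by rw [hj, Nat.add_assoc]

lemma choose_mono_left (d a : ℕ) : ∀ k : ℕ, 2 * (a + k) ≤ d → d.choose a ≤ d.choose (a + k) := by
  intro k
  induction k with
  | zero => intro _; rfl
  | succ k ih =>
    intro hk
    have h1 := ih (by omega)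
    have h2 : a + k < d / 2 := by omega
    have h3 : a + (k + 1) = (a + k) + 1 := by omega
    rw [h3]
    exact h1.trans (Nat.choose_le_succ_of_lt_half_left h2)

/-- **Combinatorial packing-ratio bound.** There is a universal constant `c > 0` such
that for all integers `1 ≤ s`, `2s ≤ d`,
`log(⌊s/4⌋! (d - ⌊s/4⌋)! / (s! (d - s)!)) ≥ c s log(d/s)`, and equivalently
`log(2^s C(d,s)) - log(⌈s/4⌉ 2^{⌊s/4⌋} C(d, ⌊s/4⌋)) ≥ c s log(d/s)`. -/
theorem packing_ratio_log_bound :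
    ∃ c : ℝ, 0 < c ∧ ∀ s d : ℕ, 1 ≤ s → 2 * s ≤ d →
      (Real.log ((((s / 4).factorial * (d - s / 4).factorial : ℕ) : ℝ) /
          ((s.factorial * (d - s).factorial : ℕ) : ℝ))
        ≥ c * s * Real.log ((d : ℝ) / s)) ∧
      (Real.log ((2 ^ s * d.choose s : ℕ) : ℝ)
          - Real.log (((s + 3) / 4 * 2 ^ (s / 4) * d.choose (s / 4) : ℕ) : ℝ)
        ≥ c * s * Real.log ((d : ℝ) / s)) := by
  refine ⟨1 / 4, by norm_num, fun s d hs hd => ?_⟩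
  set t := s / 4 with ht
  set u := (s + 1) / 2 with hu
  have hsd : s ≤ d := by omega
  have htd : t ≤ d := by omega
  have hs' : (0 : ℝ) < s := by exact_mod_cast hs
  have hr1 : (1 : ℝ) ≤ (d : ℝ) / s := by
    rw [le_div_iff₀ hs', one_mul]; exact_mod_cast hsd
  have hlogr : 0 ≤ Real.log ((d : ℝ) / s) := Real.log_nonneg hr1
  have hCt : (0 : ℝ) < (d.choose t : ℝ) := by exact_mod_cast Nat.choose_pos htd
  have hCs : (0 : ℝ) < (d.choose s : ℝ) := by exact_mod_cast Nat.choose_pos hsd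
  -- key inequality
  have hgrow := choose_growth s d hs hd (u - t) (by omega)
  have htu : t + (u - t) = u := by omega
  rw [htu] at hgrow
  have hmono := choose_mono_left d u (s - u) (by omega)
  have hus : u + (s - u) = s := by omega
  rw [hus] at hmono
  have hmono' : (d.choose u : ℝ) ≤ d.choose s := by exact_mod_cast hmono
  have hkey : ((d : ℝ) / s) ^ (u - t) * d.choose t ≤ d.choose s := hgrow.trans hmono'
  -- log of key
  have hlogkey : ((u - t : ℕ) : ℝ) * Real.log ((d : ℝ) / s) + Real.log (d.choose t)
      ≤ Real.log (d.choose s) := by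
    have h1 : Real.log (((d : ℝ) / s) ^ (u - t) * d.choose t) ≤ Real.log (d.choose s) := by
      apply Real.log_le_log (by positivity) hkey
    rwa [Real.log_mul (by positivity) (ne_of_gt hCt), Real.log_pow] at h1
  have hcount : (s : ℝ) / 4 ≤ ((u - t : ℕ) : ℝ) := by
    have : s ≤ 4 * (u - t) := by omega
    have h1 : (s : ℝ) ≤ 4 * ((u - t : ℕ) : ℝ) := by exact_mod_cast this
    linarith
  have hmain : 1 / 4 * (s : ℝ) * Real.log ((d : ℝ) / s)
      ≤ Real.log (d.choose s) - Real.log (d.choose t) := by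
    have h2 : 1 / 4 * (s : ℝ) * Real.log ((d : ℝ) / s)
        ≤ ((u - t : ℕ) : ℝ) * Real.log ((d : ℝ) / s) := by
      apply mul_le_mul_of_nonneg_right (by linarith) hlogr
    linarith
  constructor
  · -- part 1: rewrite factorial ratio as choose ratio
    have e1 := Nat.choose_mul_factorial_mul_factorial hsd
    have e2 := Nat.choose_mul_factorial_mul_factorial htd
    have hF : ((t.factorial * (d - t).factorial : ℕ) : ℝ) /
        ((s.factorial * (d - s).factorial : ℕ) : ℝ)
        = (d.choose s : ℝ) / (d.choose t : ℝ) := by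
      have hnat : t.factorial * (d - t).factorial * d.choose t
          = d.choose s * (s.factorial * (d - s).factorial) := by
        calc t.factorial * (d - t).factorial * d.choose t
            = d.choose t * t.factorial * (d - t).factorial := by ring
          _ = d.factorial := e2
          _ = d.choose s * s.factorial * (d - s).factorial := e1.symm
          _ = d.choose s * (s.factorial * (d - s).factorial) := by ring
      have hFs : (0 : ℝ) < ((s.factorial * (d - s).factorial : ℕ) : ℝ) := by
        exact_mod_cast Nat.mul_pos s.factorial_pos (d - s).factorial_pos
      rw [div_eq_div_iff (ne_of_gt hFs) (ne_of_gt hCt)]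
      exact_mod_cast congrArg Nat.cast hnat
    rw [hF, Real.log_div (ne_of_gt hCs) (ne_of_gt hCt)]
    exact hmain
  · -- part 2
    have hq : 1 ≤ (s + 3) / 4 := by omega
    have hq' : (0 : ℝ) < (((s + 3) / 4 : ℕ) : ℝ) := by exact_mod_cast hq
    have hts : t ≤ s := by omega
    have hlog1 : Real.log ((2 ^ s * d.choose s : ℕ) : ℝ)
        = s * Real.log 2 + Real.log (d.choose s) := by
      push_cast
      rw [Real.log_mul (by positivity) (ne_of_gt hCs), Real.log_pow]
    have hlog2 : Real.log (((s + 3) / 4 * 2 ^ t * d.choose t : ℕ) : ℝ)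
        = Real.log (((s + 3) / 4 : ℕ) : ℝ) + t * Real.log 2 + Real.log (d.choose t) := by
      push_cast
      rw [Real.log_mul (by positivity) (ne_of_gt hCt),
        Real.log_mul (ne_of_gt hq') (by positivity), Real.log_pow]
    rw [hlog1, hlog2]
    have hqb : Real.log (((s + 3) / 4 : ℕ) : ℝ) ≤ ((s - t : ℕ) : ℝ) * Real.log 2 := by
      have h1 : (((s + 3) / 4 : ℕ) : ℝ) ≤ ((2 ^ (s - t) : ℕ) : ℝ) := by
        exact_mod_cast aux_pow_bound s
      have h2 := Real.log_le_log hq' h1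
      rwa [show ((2 ^ (s - t) : ℕ) : ℝ) = (2 : ℝ) ^ (s - t) by push_cast; ring,
        Real.log_pow] at h2
    have hst : ((s - t : ℕ) : ℝ) = (s : ℝ) - (t : ℝ) := by
      push_cast [Nat.cast_sub hts]; ring
    rw [hst] at hqb
    have hlog2pos : (0 : ℝ) ≤ Real.log 2 := Real.log_nonneg (by norm_num)
    linarith
end
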